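/- arXiv:2007.14459 — 2 statements merged into one kernel-verified Lean document; each statement's English description precedes it below -/
import Mathlib

section
/- In a semi-Nelson algebra, for all a, b: a→_N b = 1 and b→_N a = 1 if and only if a→b = 1 and b→a = 1, where x→_N y := x→(x∧y). -/
/-- The operations of a semi-Nelson algebra. -/
class SemiNelsonOps (α : Type*) where
  sinf : α → α → α
  ssup : α → α → α
  snimp : α → α → α
  sneg : α → α
  sone : α

open SemiNelsonOps

/-- The weak implication `x →_N y := x → (x ⊓ y)`. -/
def impN {α : Type*} [SemiNelsonOps α] (x y : α) : α := snimp x (sinf x y)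

/-- A semi-Nelson algebra: operations ⟨∧, ∨, →, ∼, 1⟩ satisfying SN1–SN11. -/
class SemiNelsonAlgebra (α : Type*) extends SemiNelsonOps α where
  sn1 : ∀ x y : α, sinf x (ssup x y) = x
  sn2 : ∀ x y z : α, sinf x (ssup y z) = ssup (sinf z x) (sinf y x)
  sn3 : ∀ x : α, sneg (sneg x) = x
  sn4 : ∀ x y : α, sneg (sinf x y) = ssup (sneg x) (sneg y)
  sn5 : ∀ x y : α, sinf x (sneg x) = sinf (sinf x (sneg x)) (ssup y (sneg y))
  sn6 : ∀ x y : α, sinf x (impN x y) = sinf x (ssup (sneg x) y)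
  sn7 : ∀ x y z : α, impN x (impN y z) = impN (sinf x y) z
  sn8 : ∀ x y z : α,
    impN (impN x y) (impN (impN y x) (impN (snimp x z) (snimp y z))) = sone
  sn9 : ∀ x y z : α,
    impN (impN x y) (impN (impN y x) (impN (snimp z x) (snimp z y))) = sone
  sn10 : ∀ x y : α, impN (sneg (snimp x y)) (sinf x (sneg y)) = sone
  sn11 : ∀ x y : α, impN (sinf x (sneg y)) (sneg (snimp x y)) = sone

theorem lat_maa {α : Type*} [SemiNelsonAlgebra α] (a : α) :
    sinf (sinf a a) a = sinf a a :=
  calc sinf (sinf a a) a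
      _ = sinf (sinf a a) (sinf a (ssup a a)) := congrArg (fun u => sinf (sinf a a) u) ((SemiNelsonAlgebra.sn1 a a).symm)
      _ = sinf (sinf a a) (ssup (sinf a a) (sinf a a)) := congrArg (fun u => sinf (sinf a a) u) (SemiNelsonAlgebra.sn2 a a a)
      _ = sinf a a := SemiNelsonAlgebra.sn1 (sinf a a) (sinf a a)

theorem lat_midem {α : Type*} [SemiNelsonAlgebra α] (a : α) :
    sinf a a = a :=
  calc sinf a a
      _ = sinf a (sinf a (ssup a a)) := congrArg (fun u => sinf a u) ((SemiNelsonAlgebra.sn1 a a).symm)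
      _ = sinf a (ssup (sinf a a) (sinf a a)) := congrArg (fun u => sinf a u) (SemiNelsonAlgebra.sn2 a a a)
      _ = ssup (sinf (sinf a a) a) (sinf (sinf a a) a) := SemiNelsonAlgebra.sn2 a (sinf a a) (sinf a a)
      _ = ssup (sinf (sinf a a) a) (sinf a a) := congrArg (fun u => ssup (sinf (sinf a a) a) u) (lat_maa a)
      _ = sinf a (ssup a (sinf a a)) := (SemiNelsonAlgebra.sn2 a a (sinf a a)).symm
      _ = a := SemiNelsonAlgebra.sn1 a (sinf a a)

theorem lat_jidem {α : Type*} [SemiNelsonAlgebra α] (a : α) :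
    ssup a a = a :=
  calc ssup a a
      _ = ssup (sinf a a) a := congrArg (fun u => ssup u a) ((lat_midem a).symm)
      _ = ssup (sinf a a) (sinf a a) := congrArg (fun u => ssup (sinf a a) u) ((lat_midem a).symm)
      _ = sinf a (ssup a a) := (SemiNelsonAlgebra.sn2 a a a).symm
      _ = a := SemiNelsonAlgebra.sn1 a a

theorem lat_mcomm {α : Type*} [SemiNelsonAlgebra α] (a : α) (b : α) :
    sinf a b = sinf b a :=
  calc sinf a b
      _ = ssup (sinf a b) (sinf a b) := (lat_jidem (sinf a b)).symm
      _ = sinf b (ssup a a) := (SemiNelsonAlgebra.sn2 b a a).symm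
      _ = sinf b a := congrArg (fun u => sinf b u) (lat_jidem a)

theorem lat_abs4 {α : Type*} [SemiNelsonAlgebra α] (a : α) (b : α) :
    ssup (sinf b a) a = a :=
  calc ssup (sinf b a) a
      _ = ssup (sinf b a) (sinf a a) := congrArg (fun u => ssup (sinf b a) u) ((lat_midem a).symm)
      _ = sinf a (ssup a b) := (SemiNelsonAlgebra.sn2 a a b).symm
      _ = a := SemiNelsonAlgebra.sn1 a b

theorem lat_jcomm {α : Type*} [SemiNelsonAlgebra α] (a : α) (b : α) :
    ssup a b = ssup b a :=
  calc ssup a b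
      _ = sinf (ssup a b) (ssup a b) := (lat_midem (ssup a b)).symm
      _ = ssup (sinf b (ssup a b)) (sinf a (ssup a b)) := SemiNelsonAlgebra.sn2 (ssup a b) a b
      _ = ssup (sinf b (ssup a b)) a := congrArg (fun u => ssup (sinf b (ssup a b)) u) (SemiNelsonAlgebra.sn1 a b)
      _ = ssup (ssup (sinf b b) (sinf a b)) a := congrArg (fun u => ssup u a) (SemiNelsonAlgebra.sn2 b a b)
      _ = ssup (ssup b (sinf a b)) a := congrArg (fun u => ssup (ssup u (sinf a b)) a) (lat_midem b)
      _ = ssup (ssup b (sinf (sinf a b) (ssup (sinf a b) b))) a := congrArg (fun u => ssup (ssup b u) a) ((SemiNelsonAlgebra.sn1 (sinf a b) b).symm)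
      _ = ssup (ssup b (sinf (sinf a b) b)) a := congrArg (fun u => ssup (ssup b (sinf (sinf a b) u)) a) (lat_abs4 b a)
      _ = ssup (ssup (sinf b b) (sinf (sinf a b) b)) a := congrArg (fun u => ssup (ssup u (sinf (sinf a b) b)) a) ((lat_midem b).symm)
      _ = ssup (sinf b (ssup (sinf a b) b)) a := congrArg (fun u => ssup u a) ((SemiNelsonAlgebra.sn2 b (sinf a b) b).symm)
      _ = ssup (sinf b b) a := congrArg (fun u => ssup (sinf b u) a) (lat_abs4 b a)
      _ = ssup b a := congrArg (fun u => ssup u a) (lat_midem b)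

theorem lat_abs5 {α : Type*} [SemiNelsonAlgebra α] (a : α) (b : α) :
    ssup a (sinf b a) = a :=
  calc ssup a (sinf b a)
      _ = ssup (sinf b a) a := lat_jcomm a (sinf b a)
      _ = a := lat_abs4 a b

theorem lat_abs6 {α : Type*} [SemiNelsonAlgebra α] (a : α) (b : α) :
    sinf a (ssup b a) = a :=
  calc sinf a (ssup b a)
      _ = sinf a (ssup a b) := congrArg (fun u => sinf a u) (lat_jcomm b a)
      _ = a := SemiNelsonAlgebra.sn1 a b

theorem lat_D1 {α : Type*} [SemiNelsonAlgebra α] (a : α) (b : α) (c : α) :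
    sinf a (ssup b c) = ssup (sinf a b) (sinf a c) :=
  calc sinf a (ssup b c)
      _ = ssup (sinf c a) (sinf b a) := SemiNelsonAlgebra.sn2 a b c
      _ = ssup (sinf b a) (sinf c a) := lat_jcomm (sinf c a) (sinf b a)
      _ = ssup (sinf b a) (sinf a c) := congrArg (fun u => ssup (sinf b a) u) ((lat_mcomm a c).symm)
      _ = ssup (sinf a b) (sinf a c) := congrArg (fun u => ssup u (sinf a c)) ((lat_mcomm a b).symm)

theorem lat_zv {α : Type*} [SemiNelsonAlgebra α] (a : α) (b : α) (c : α) :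
    sinf c (ssup a (ssup b c)) = c :=
  calc sinf c (ssup a (ssup b c))
      _ = ssup (sinf (ssup b c) c) (sinf a c) := SemiNelsonAlgebra.sn2 c a (ssup b c)
      _ = ssup (sinf c (ssup b c)) (sinf a c) := congrArg (fun u => ssup u (sinf a c)) (lat_mcomm (ssup b c) c)
      _ = ssup c (sinf a c) := congrArg (fun u => ssup u (sinf a c)) (lat_abs6 c b)
      _ = c := lat_abs5 c a

theorem lat_yv {α : Type*} [SemiNelsonAlgebra α] (a : α) (b : α) (c : α) :
    sinf b (ssup a (ssup b c)) = b :=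
  calc sinf b (ssup a (ssup b c))
      _ = sinf b (ssup a (ssup c b)) := congrArg (fun u => sinf b (ssup a u)) (lat_jcomm b c)
      _ = b := lat_zv a c b

theorem lat_xu {α : Type*} [SemiNelsonAlgebra α] (a : α) (b : α) (c : α) :
    sinf a (ssup (ssup a b) c) = a :=
  calc sinf a (ssup (ssup a b) c)
      _ = sinf a (ssup c (ssup a b)) := congrArg (fun u => sinf a u) (lat_jcomm (ssup a b) c)
      _ = a := lat_yv c a b

theorem lat_yu {α : Type*} [SemiNelsonAlgebra α] (a : α) (b : α) (c : α) :
    sinf b (ssup (ssup a b) c) = b :=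
  calc sinf b (ssup (ssup a b) c)
      _ = sinf b (ssup c (ssup a b)) := congrArg (fun u => sinf b u) (lat_jcomm (ssup a b) c)
      _ = b := lat_zv c a b


section Lemmas

variable {α : Type*} [SemiNelsonAlgebra α]

open SemiNelsonAlgebra

theorem lat_abs7 (a b : α) : ssup a (sinf a b) = a :=
  (congrArg (fun u => ssup a u) (lat_mcomm a b)).trans (lat_abs5 a b)

theorem lat_jassoc (a b c : α) : ssup (ssup a b) c = ssup a (ssup b c) := by
  have exp1 : sinf (ssup c (ssup b a)) (ssup (ssup c b) a) = ssup a (ssup b c) := by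
    calc sinf (ssup c (ssup b a)) (ssup (ssup c b) a)
        _ = ssup (sinf a (ssup c (ssup b a))) (sinf (ssup c b) (ssup c (ssup b a))) :=
            sn2 (ssup c (ssup b a)) (ssup c b) a
        _ = ssup a (sinf (ssup c b) (ssup c (ssup b a))) :=
            congrArg (fun u => ssup u (sinf (ssup c b) (ssup c (ssup b a)))) (lat_zv c b a)
        _ = ssup a (sinf (ssup c (ssup b a)) (ssup c b)) :=
            congrArg (fun u => ssup a u) (lat_mcomm (ssup c b) (ssup c (ssup b a)))
        _ = ssup a (ssup (sinf b (ssup c (ssup b a))) (sinf c (ssup c (ssup b a)))) :=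
            congrArg (fun u => ssup a u) (sn2 (ssup c (ssup b a)) c b)
        _ = ssup a (ssup b (sinf c (ssup c (ssup b a)))) :=
            congrArg (fun u => ssup a (ssup u (sinf c (ssup c (ssup b a))))) (lat_yv c b a)
        _ = ssup a (ssup b c) :=
            congrArg (fun u => ssup a (ssup b u)) (sn1 c (ssup b a))
  have exp2 : sinf (ssup (ssup c b) a) (ssup c (ssup b a)) = ssup (ssup a b) c := by
    calc sinf (ssup (ssup c b) a) (ssup c (ssup b a))
        _ = ssup (sinf (ssup b a) (ssup (ssup c b) a)) (sinf c (ssup (ssup c b) a)) :=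
            sn2 (ssup (ssup c b) a) c (ssup b a)
        _ = ssup (sinf (ssup b a) (ssup (ssup c b) a)) c :=
            congrArg (fun u => ssup (sinf (ssup b a) (ssup (ssup c b) a)) u) (lat_xu c b a)
        _ = ssup (sinf (ssup (ssup c b) a) (ssup b a)) c :=
            congrArg (fun u => ssup u c) (lat_mcomm (ssup b a) (ssup (ssup c b) a))
        _ = ssup (ssup (sinf a (ssup (ssup c b) a)) (sinf b (ssup (ssup c b) a))) c :=
            congrArg (fun u => ssup u c) (sn2 (ssup (ssup c b) a) b a)
        _ = ssup (ssup a (sinf b (ssup (ssup c b) a))) c :=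
            congrArg (fun u => ssup (ssup u (sinf b (ssup (ssup c b) a))) c) (lat_abs6 a (ssup c b))
        _ = ssup (ssup a b) c :=
            congrArg (fun u => ssup (ssup a u) c) (lat_yu c b a)
  exact exp2.symm.trans ((lat_mcomm (ssup (ssup c b) a) (ssup c (ssup b a))).trans exp1)

theorem lat_D2 (a b c : α) : sinf (ssup b a) (ssup c a) = ssup a (sinf c b) := by
  calc sinf (ssup b a) (ssup c a)
      _ = ssup (sinf a (ssup b a)) (sinf c (ssup b a)) := sn2 (ssup b a) c a
      _ = ssup a (sinf c (ssup b a)) :=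
          congrArg (fun u => ssup u (sinf c (ssup b a))) (lat_abs6 a b)
      _ = ssup a (ssup (sinf c b) (sinf c a)) := congrArg (fun u => ssup a u) (lat_D1 c b a)
      _ = ssup (ssup a (sinf c b)) (sinf c a) := (lat_jassoc a (sinf c b) (sinf c a)).symm
      _ = ssup (ssup (sinf c b) a) (sinf c a) :=
          congrArg (fun u => ssup u (sinf c a)) (lat_jcomm a (sinf c b))
      _ = ssup (sinf c b) (ssup a (sinf c a)) := lat_jassoc (sinf c b) a (sinf c a)
      _ = ssup (sinf c b) a := congrArg (fun u => ssup (sinf c b) u) (lat_abs5 a c)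
      _ = ssup a (sinf c b) := lat_jcomm (sinf c b) a

theorem lat_A2d (x y z : α) : ssup x (sinf y z) = sinf (ssup z x) (ssup y x) :=
  (lat_D2 x z y).symm

theorem lat_zvd (a b c : α) : ssup c (sinf a (sinf b c)) = c := by
  calc ssup c (sinf a (sinf b c))
      _ = sinf (ssup (sinf b c) c) (ssup a c) := lat_A2d c a (sinf b c)
      _ = sinf (ssup c (sinf b c)) (ssup a c) :=
          congrArg (fun u => sinf u (ssup a c)) (lat_jcomm (sinf b c) c)
      _ = sinf c (ssup a c) := congrArg (fun u => sinf u (ssup a c)) (lat_abs5 c b)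
      _ = c := lat_abs6 c a

theorem lat_yvd (a b c : α) : ssup b (sinf a (sinf b c)) = b := by
  calc ssup b (sinf a (sinf b c))
      _ = ssup b (sinf a (sinf c b)) :=
          congrArg (fun u => ssup b (sinf a u)) (lat_mcomm b c)
      _ = b := lat_zvd a c b

theorem lat_xud (a b c : α) : ssup a (sinf (sinf a b) c) = a := by
  calc ssup a (sinf (sinf a b) c)
      _ = ssup a (sinf c (sinf a b)) :=
          congrArg (fun u => ssup a u) (lat_mcomm (sinf a b) c)
      _ = a := lat_yvd c a b

theorem lat_yud (a b c : α) : ssup b (sinf (sinf a b) c) = b := by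
  calc ssup b (sinf (sinf a b) c)
      _ = ssup b (sinf c (sinf a b)) :=
          congrArg (fun u => ssup b u) (lat_mcomm (sinf a b) c)
      _ = b := lat_zvd c a b

theorem lat_massoc (a b c : α) : sinf (sinf a b) c = sinf a (sinf b c) := by
  have exp1 : ssup (sinf c (sinf b a)) (sinf (sinf c b) a) = sinf a (sinf b c) := by
    calc ssup (sinf c (sinf b a)) (sinf (sinf c b) a)
        _ = sinf (ssup a (sinf c (sinf b a))) (ssup (sinf c b) (sinf c (sinf b a))) :=
            lat_A2d (sinf c (sinf b a)) (sinf c b) a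
        _ = sinf a (ssup (sinf c b) (sinf c (sinf b a))) :=
            congrArg (fun u => sinf u (ssup (sinf c b) (sinf c (sinf b a)))) (lat_zvd c b a)
        _ = sinf a (ssup (sinf c (sinf b a)) (sinf c b)) :=
            congrArg (fun u => sinf a u) (lat_jcomm (sinf c b) (sinf c (sinf b a)))
        _ = sinf a (sinf (ssup b (sinf c (sinf b a))) (ssup c (sinf c (sinf b a)))) :=
            congrArg (fun u => sinf a u) (lat_A2d (sinf c (sinf b a)) c b)
        _ = sinf a (sinf b (ssup c (sinf c (sinf b a)))) :=
            congrArg (fun u => sinf a (sinf u (ssup c (sinf c (sinf b a))))) (lat_yvd c b a)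
        _ = sinf a (sinf b c) :=
            congrArg (fun u => sinf a (sinf b u)) (lat_abs7 c (sinf b a))
  have exp2 : ssup (sinf (sinf c b) a) (sinf c (sinf b a)) = sinf (sinf a b) c := by
    calc ssup (sinf (sinf c b) a) (sinf c (sinf b a))
        _ = sinf (ssup (sinf b a) (sinf (sinf c b) a)) (ssup c (sinf (sinf c b) a)) :=
            lat_A2d (sinf (sinf c b) a) c (sinf b a)
        _ = sinf (ssup (sinf b a) (sinf (sinf c b) a)) c :=
            congrArg (fun u => sinf (ssup (sinf b a) (sinf (sinf c b) a)) u) (lat_xud c b a)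
        _ = sinf (ssup (sinf (sinf c b) a) (sinf b a)) c :=
            congrArg (fun u => sinf u c) (lat_jcomm (sinf b a) (sinf (sinf c b) a))
        _ = sinf (sinf (ssup a (sinf (sinf c b) a)) (ssup b (sinf (sinf c b) a))) c :=
            congrArg (fun u => sinf u c) (lat_A2d (sinf (sinf c b) a) b a)
        _ = sinf (sinf a (ssup b (sinf (sinf c b) a))) c :=
            congrArg (fun u => sinf (sinf u (ssup b (sinf (sinf c b) a))) c) (lat_abs5 a (sinf c b))
        _ = sinf (sinf a b) c :=
            congrArg (fun u => sinf (sinf a u) c) (lat_yud c b a)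
  exact exp2.symm.trans ((lat_jcomm (sinf (sinf c b) a) (sinf c (sinf b a))).trans exp1)

theorem demorgan_j (x y : α) : sneg (ssup x y) = sinf (sneg x) (sneg y) := by
  have h : ssup x y = ssup (sneg (sneg x)) (sneg (sneg y)) := by rw [sn3, sn3]
  rw [h, ← sn4, sn3]

theorem lem_N (x : α) : sinf x (snimp x x) = x := by
  have h := sn6 x x
  simp only [impN] at h
  rw [lat_midem] at h
  rw [h, sn2, lat_midem]
  exact lat_abs5 x (sneg x)

theorem lem_M (x : α) : impN (snimp x x) (snimp x x) = sone := by
  have h := sn9 x x x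
  have e : impN x x = snimp x x := by simp only [impN, lat_midem]
  rw [e] at h
  rw [sn7, lat_midem, sn7, lat_midem] at h
  exact h

theorem lem_T' (x : α) : sinf (snimp x x) sone = snimp x x := by
  have h := sn6 (snimp x x) (snimp x x)
  rw [lem_M] at h
  rw [h, sn2, lat_midem]
  exact lat_abs5 _ _

theorem lem_T (x : α) : sinf x sone = x := by
  calc sinf x sone
      _ = sinf (sinf x (snimp x x)) sone := by rw [lem_N]
      _ = sinf x (sinf (snimp x x) sone) := lat_massoc x (snimp x x) sone
      _ = sinf x (snimp x x) := by rw [lem_T']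
      _ = x := lem_N x

theorem lem_Tl (x : α) : sinf sone x = x := (lat_mcomm sone x).trans (lem_T x)

theorem lem_J (z : α) : ssup sone z = sone := by
  calc ssup sone z
      _ = sinf (ssup sone z) sone := (lem_T _).symm
      _ = sinf sone (ssup sone z) := lat_mcomm _ _
      _ = sone := sn1 sone z

theorem lem_B (y : α) : ssup (sneg sone) y = y := by
  have h1 : sneg sone = sinf (sneg sone) y := by
    have hj := lem_J (sneg y)
    calc sneg sone
        _ = sneg (ssup sone (sneg y)) := by rw [hj]
        _ = sinf (sneg sone) (sneg (sneg y)) := demorgan_j _ _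
        _ = sinf (sneg sone) y := by rw [sn3]
  calc ssup (sneg sone) y
      _ = ssup (sinf (sneg sone) y) y := by rw [← h1]
      _ = y := lat_abs4 y (sneg sone)

theorem lem_P2 (y : α) : impN sone y = y := by
  have h := sn6 sone y
  rw [lem_Tl, lem_Tl, lem_B] at h
  exact h

theorem lem_i1 (z : α) : snimp sone z = z := by
  have e : snimp sone z = impN sone z := by
    show snimp sone z = snimp sone (sinf sone z)
    rw [lem_Tl]
  rw [e]
  exact lem_P2 z

theorem lem_R8 (x z : α) : impN (sinf x (snimp x z)) z = sone := by
  have h := sn8 x sone z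
  have e1 : impN x sone = snimp x x := by
    show snimp x (sinf x sone) = snimp x x
    rw [lem_T]
  rw [e1, lem_P2, lem_i1] at h
  rw [sn7, lat_mcomm (snimp x x) x, lem_N] at h
  rw [sn7] at h
  exact h

theorem lem_P1 (x : α) : impN x x = sone := by
  have h := lem_R8 x x
  rw [lem_N] at h
  exact h

theorem lem_R (x : α) : snimp x x = sone := by
  have e : snimp x x = impN x x := by simp only [impN, lat_midem]
  rw [e]
  exact lem_P1 x

end Lemmas

/-- In a semi-Nelson algebra, `a →_N b = 1` and `b →_N a = 1` iff
`a → b = 1` and `b → a = 1`. -/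
theorem impN_iff_imp {α : Type*} [SemiNelsonAlgebra α] (a b : α) :
    (impN a b = sone ∧ impN b a = sone) ↔ (snimp a b = sone ∧ snimp b a = sone) := by
  open SemiNelsonAlgebra in
  constructor
  · rintro ⟨h1, h2⟩
    constructor
    · have h := sn9 a b a
      rw [h1, h2, lem_R a, lem_P2, lem_P2, lem_P2] at h
      exact h
    · have h := sn8 a b a
      rw [h1, h2, lem_R a, lem_P2, lem_P2, lem_P2] at h
      exact h
  · rintro ⟨h1, h2⟩
    constructor
    · have h := lem_R8 a b
      rw [h1, lem_T] at h
      exact h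
    · have h := lem_R8 b a
      rw [h2, lem_T] at h
      exact h
end

section
/- In a semi-Nelson algebra A, the set of positive elements A⁺ = {a : ∼a ≤ a} equals {x ∨ ∼x : x ∈ A}, where a ≤ b means a∧b = a. -/
open SemiNelsonOps

section Aux
variable {α : Type*} [SemiNelsonAlgebra α]
open SemiNelsonAlgebra

private lemma snC (x y : α) : x = ssup (sinf y x) (sinf x x) :=
  (sn1 x y).symm.trans (sn2 x x y)

private lemma snI (x : α) : sinf x x = x := by
  have D : x = ssup (sinf x x) (sinf x x) := snC x x
  have E : sinf x x = sinf (sinf x x) x := by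
    conv_lhs => rw [← sn1 (sinf x x) (sinf x x), ← D]
  calc sinf x x = sinf x (ssup (sinf x x) (sinf x x)) := by rw [← D]
    _ = ssup (sinf (sinf x x) x) (sinf (sinf x x) x) := sn2 x (sinf x x) (sinf x x)
    _ = ssup (sinf x x) (sinf x x) := by rw [← E]
    _ = x := D.symm

private lemma snF (x y : α) : ssup (sinf y x) x = x := by
  have := snC x y; rw [snI] at this; exact this.symm

private lemma snJ (x : α) : ssup x x = x := by
  have := snF x x; rwa [snI] at this

private lemma snCm (x y : α) : sinf x y = sinf y x := by
  calc sinf x y = sinf x (ssup y y) := by rw [snJ]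
    _ = ssup (sinf y x) (sinf y x) := sn2 x y y
    _ = sinf y x := snJ _

private lemma snDM (a b : α) : sneg (ssup a b) = sinf (sneg a) (sneg b) := by
  have h : ssup a b = sneg (sinf (sneg a) (sneg b)) := by rw [sn4, sn3, sn3]
  rw [h, sn3]

private lemma snFj (x y : α) : ssup x (sinf x y) = x := by
  have h := congrArg sneg (sn1 (sneg x) (sneg y))
  simp only [sn4, snDM, sn3] at h
  exact h

end Aux

/-- In a semi-Nelson algebra, the set of positive elements `{a : ∼a ≤ a}`
(where `x ≤ y` means `x ⊓ y = x`) equals `{x ⊔ ∼x : x ∈ A}`. -/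
theorem positives_eq_sup_neg {α : Type*} [SemiNelsonAlgebra α] :
    {a : α | sinf (sneg a) a = sneg a} = {y : α | ∃ x : α, y = ssup x (sneg x)} := by
  ext a
  simp only [Set.mem_setOf_eq]
  constructor
  · intro h
    refine ⟨a, ?_⟩
    rw [← h, snCm, snFj]
  · rintro ⟨x, rfl⟩
    rw [snDM, SemiNelsonAlgebra.sn3]
    have := SemiNelsonAlgebra.sn5 (sneg x) x
    rw [SemiNelsonAlgebra.sn3] at this
    exact this.symm
end
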